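/- arXiv:2508.16202 — 2 statements merged into one kernel-verified Lean document; each statement's English description precedes it below -/
import Mathlib

section
/- Let A_t be a Poisson process with rate a and J_t an independent renewal process with inter-arrival times Δ + Exp(h), with 1/a > 1/h + Δ. Let τ = inf{t ≥ 0 : J_t = A_t + 1} be the first time the renewal process exceeds the Poisson process by one. Then τ is finite with probability 1. -/
/-!
By the strong law of large numbers the renewal epochs `S n = X 0 + ⋯ + X (n - 1)` satisfy
`S n / n → Δ + 1/h`, and the Poisson process, whose unit increments are i.i.d. Poisson(`a`),
satisfies `A t / t → a`. As `a (Δ + 1/h) < 1`, this forces `A (S n) < n` for some `n`. Since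
`n ↦ A (S n)` is monotone, at the least such `n = m + 1` we get `A (S (m + 1)) = m`, whereas
`J (S (m + 1)) = m + 1` because the epochs increase strictly.
-/

open MeasureTheory ProbabilityTheory
open scoped NNReal ENNReal

/-- A counting process `N : ℝ → Ω → ℕ` is a Poisson process of rate `r`. -/
structure IsPoissonProcess {Ω : Type*} [MeasurableSpace Ω] (P : Measure Ω)
    (r : ℝ≥0) (N : ℝ → Ω → ℕ) : Prop where
  measurable : ∀ t, Measurable (N t)
  init : ∀ ω, N 0 ω = 0
  mono : ∀ ω, Monotone fun t => N t ω
  indep_increments : ∀ s₁ t₁ s₂ t₂ : ℝ, s₁ ≤ t₁ → t₁ ≤ s₂ → s₂ ≤ t₂ →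
    IndepFun (fun ω => N t₁ ω - N s₁ ω) (fun ω => N t₂ ω - N s₂ ω) P
  poisson_law : ∀ s t : ℝ, 0 ≤ s → s ≤ t → ∀ k : ℕ,
    P {ω | N t ω - N s ω = k} = poissonPMF (r * (t - s).toNNReal) k

/-- The law of `Δ + X` where `X` is exponential with rate `h`:
the measure on `ℝ` with density `h e^{-h(t-Δ)} 1{t > Δ}`. -/
noncomputable def shiftedExpMeasure (h Δ : ℝ) : Measure ℝ :=
  volume.withDensity fun t =>
    ENNReal.ofReal (if Δ < t then h * Real.exp (-h * (t - Δ)) else 0)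

/-- The renewal counting process built from interarrival times `X`:
`renewalCount X t ω` is the number of renewals in `(0, t]`. -/
noncomputable def renewalCount {Ω : Type*} (X : ℕ → Ω → ℝ) (t : ℝ) (ω : Ω) : ℕ :=
  sSup {n : ℕ | ∑ i ∈ Finset.range n, X i ω ≤ t}


open Filter Real Set Finset
open scoped Topology

lemma Monotone.tendsto_div_self_atTop {f : ℝ → ℝ} (hf : Monotone f) {L : ℝ}
    (hlim : Tendsto (fun n : ℕ => f n / n) atTop (𝓝 L)) :
    Tendsto (fun t => f t / t) atTop (𝓝 L) := by
  have hfloor : Tendsto (fun t : ℝ => f ⌊t⌋₊ / ⌊t⌋₊ * (⌊t⌋₊ / t)) atTop (𝓝 (L * 1)) :=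
    (hlim.comp tendsto_nat_floor_atTop).mul tendsto_nat_floor_div_atTop
  have hceil : Tendsto (fun t : ℝ => f ⌈t⌉₊ / ⌈t⌉₊ * (⌈t⌉₊ / t)) atTop (𝓝 (L * 1)) :=
    (hlim.comp tendsto_nat_ceil_atTop).mul tendsto_nat_ceil_div_atTop
  rw [mul_one] at hfloor hceil
  refine tendsto_of_tendsto_of_tendsto_of_le_of_le' hfloor hceil ?_ ?_
  all_goals filter_upwards [eventually_ge_atTop 1] with t ht
  · have hfloor_pos : (0 : ℝ) < ⌊t⌋₊ := by exact_mod_cast Nat.floor_pos.mpr ht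
    rw [div_mul_div_cancel₀ hfloor_pos.ne']
    gcongr
    exact hf (Nat.floor_le (by linarith))
  · have hceil_pos : (0 : ℝ) < ⌈t⌉₊ := by exact_mod_cast Nat.ceil_pos.mpr (by linarith)
    rw [div_mul_div_cancel₀ hceil_pos.ne']
    gcongr
    exact hf (Nat.le_ceil t)

lemma eventually_lt_of_tendsto_div {g : ℝ → ℝ} {S : ℕ → ℝ} {La Lx : ℝ}
    (hg : Tendsto (fun t => g t / t) atTop (𝓝 La))
    (hS : Tendsto (fun n : ℕ => S n / n) atTop (𝓝 Lx)) (hLx : 0 < Lx) (hprod : La * Lx < 1) :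
    ∀ᶠ n : ℕ in atTop, g (S n) < n := by
  have hS_atTop : Tendsto S atTop atTop := tendsto_natCast_atTop_atTop.num hLx hS
  have hlim : Tendsto (fun n : ℕ => g (S n) / S n * (S n / n)) atTop (𝓝 (La * Lx)) :=
    (hg.comp hS_atTop).mul hS
  filter_upwards [hlim.eventually (eventually_lt_nhds hprod), hS_atTop.eventually_gt_atTop 0,
    eventually_gt_atTop 0] with n hlt hSn hn
  rw [div_mul_div_cancel₀ hSn.ne', div_lt_one (by exact_mod_cast hn)] at hlt
  exact hlt

lemma Monotone.exists_apply_succ_eq {u : ℕ → ℕ} (hu : Monotone u) (h : ∃ n, u n < n) :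
    ∃ m, u (m + 1) = m := by
  obtain ⟨m, hm⟩ : ∃ m, Nat.find h = m + 1 :=
    Nat.exists_eq_succ_of_ne_zero fun h0 => by simpa [h0] using Nat.find_spec h
  have hlt : u (m + 1) < m + 1 := hm ▸ Nat.find_spec h
  have hge : m ≤ u m := not_lt.mp (Nat.find_min h (by omega))
  have hmono : u m ≤ u (m + 1) := hu (by omega)
  exact ⟨m, by omega⟩

lemma strictMono_sum_range_of_pos {x : ℕ → ℝ} (hx : ∀ i, 0 < x i) :
    StrictMono fun n => ∑ i ∈ range n, x i :=
  strictMono_nat_of_lt_succ fun n => by simpa [sum_range_succ] using hx n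

lemma renewalCount_sum_range {Ω : Type*} {X : ℕ → Ω → ℝ} {ω : Ω} (hX : ∀ i, 0 < X i ω)
    (n : ℕ) : renewalCount X (∑ i ∈ range n, X i ω) ω = n := by
  have hle : {k : ℕ | ∑ i ∈ range k, X i ω ≤ ∑ i ∈ range n, X i ω} = Set.Iic n :=
    Set.ext fun k => (strictMono_sum_range_of_pos hX).le_iff_le
  rw [renewalCount, hle, csSup_Iic]

section ShiftedExponential

lemma shiftedExpMeasure_eq_withDensity_restrict (h Δ : ℝ) :
    shiftedExpMeasure h Δ = (volume.restrict (Ioi Δ)).withDensity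
      fun t => ((h * exp (-h * (t - Δ))).toNNReal : ℝ≥0∞) := by
  rw [shiftedExpMeasure, ← withDensity_indicator measurableSet_Ioi]
  congr 1 with t
  by_cases ht : Δ < t
  · simp [ht, ENNReal.ofReal]
  · simp [ht]

lemma ae_lt_shiftedExpMeasure (h Δ : ℝ) : ∀ᵐ t ∂shiftedExpMeasure h Δ, Δ < t := by
  rw [shiftedExpMeasure_eq_withDensity_restrict]
  exact (withDensity_absolutelyContinuous _ _).ae_le (ae_restrict_mem measurableSet_Ioi)

variable {h Δ : ℝ}

lemma hasDerivAt_shiftedExp_antideriv (hh : 0 < h) (t : ℝ) :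
    HasDerivAt (fun t => -(t + 1 / h) * exp (-h * (t - Δ))) (h * exp (-h * (t - Δ)) * t) t := by
  have hexp : HasDerivAt (fun t => exp (-h * (t - Δ))) (exp (-h * (t - Δ)) * -h) t := by
    simpa using (((hasDerivAt_id t).sub_const Δ).const_mul (-h)).exp
  have hlin : HasDerivAt (fun t => -(t + 1 / h)) (-1) t :=
    ((hasDerivAt_id t).add_const (1 / h)).neg
  refine (hlin.mul hexp).congr_deriv ?_
  field_simp
  ring

lemma tendsto_shiftedExp_antideriv_atTop (hh : 0 < h) :
    Tendsto (fun t => -(t + 1 / h) * exp (-h * (t - Δ))) atTop (𝓝 0) := by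
  -- `-(t + 1/h) e^{-h(t-Δ)} = -(e^{hΔ}/h) ((ht) e^{-ht} + e^{-ht})`
  have hu : Tendsto (fun t => h * t) atTop atTop := tendsto_id.const_mul_atTop hh
  have hlin : Tendsto (fun u : ℝ => u * exp (-u)) atTop (𝓝 0) := by
    simpa using tendsto_pow_mul_exp_neg_atTop_nhds_zero 1
  have hsum := ((hlin.comp hu).add (tendsto_exp_neg_atTop_nhds_zero.comp hu)).const_mul
    (-(exp (h * Δ) / h))
  rw [add_zero, mul_zero] at hsum
  refine hsum.congr fun t => ?_
  have hexp : exp (-h * (t - Δ)) = exp (h * Δ) * exp (-(h * t)) := by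
    rw [← exp_add]; ring_nf
  simp only [Function.comp_apply, hexp]
  field_simp

lemma integrableOn_and_integral_Ioi_shiftedExp_mul_id (hh : 0 < h) (hΔ : 0 ≤ Δ) :
    IntegrableOn (fun t => h * exp (-h * (t - Δ)) * t) (Ioi Δ) ∧
      ∫ t in Ioi Δ, h * exp (-h * (t - Δ)) * t = Δ + 1 / h := by
  have hderiv := fun t (_ : t ∈ Ioi Δ) => hasDerivAt_shiftedExp_antideriv (Δ := Δ) hh t
  have hcont := (hasDerivAt_shiftedExp_antideriv (Δ := Δ) hh Δ).continuousAt.continuousWithinAt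
    (s := Ici Δ)
  have hnonneg : ∀ t ∈ Ioi Δ, 0 ≤ h * exp (-h * (t - Δ)) * t := fun t ht => by
    have : 0 ≤ t := hΔ.trans (le_of_lt ht)
    positivity
  have htends := tendsto_shiftedExp_antideriv_atTop (Δ := Δ) hh
  refine ⟨integrableOn_Ioi_deriv_of_nonneg hcont hderiv hnonneg htends, ?_⟩
  rw [integral_Ioi_of_hasDerivAt_of_nonneg hcont hderiv hnonneg htends]
  simp

lemma integrable_id_shiftedExpMeasure (hh : 0 < h) (hΔ : 0 ≤ Δ) :
    Integrable id (shiftedExpMeasure h Δ) := by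
  rw [shiftedExpMeasure_eq_withDensity_restrict, integrable_withDensity_iff_integrable_smul
    (by fun_prop)]
  refine (integrableOn_and_integral_Ioi_shiftedExp_mul_id hh hΔ).1.congr_fun (fun t _ => ?_)
    measurableSet_Ioi
  rw [NNReal.smul_def, Real.coe_toNNReal _ (by positivity), smul_eq_mul, id]

lemma integral_id_shiftedExpMeasure (hh : 0 < h) (hΔ : 0 ≤ Δ) :
    ∫ t, t ∂shiftedExpMeasure h Δ = Δ + 1 / h := by
  rw [shiftedExpMeasure_eq_withDensity_restrict, integral_withDensity_eq_integral_smul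
    (by fun_prop), ← (integrableOn_and_integral_Ioi_shiftedExp_mul_id hh hΔ).2]
  refine setIntegral_congr_fun measurableSet_Ioi fun t _ => ?_
  rw [NNReal.smul_def, Real.coe_toNNReal _ (by positivity), smul_eq_mul]

end ShiftedExponential

section Poisson

open scoped Nat

lemma hasSum_mean_poissonMeasure (r : ℝ≥0) :
    HasSum (fun n : ℕ => exp (-r) * r ^ n / n ! * n) r := by
  rw [← hasSum_nat_add_iff' 1]
  have hsum := (hasSum_one_poissonMeasure r).mul_left (r : ℝ)
  simp only [mul_one, Finset.range_one, Finset.sum_singleton, Nat.cast_zero, mul_zero,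
    sub_zero] at hsum ⊢
  refine hsum.congr_fun fun n => ?_
  rw [Nat.factorial_succ]
  push_cast
  field_simp
  ring

lemma integrable_id_map_cast_poissonMeasure (r : ℝ≥0) : Integrable id Po(ℝ, r) := by
  rw [integrable_map_measure aestronglyMeasurable_id .of_discrete, integrable_poissonMeasure_iff]
  simpa using (hasSum_mean_poissonMeasure r).summable

lemma integral_id_map_cast_poissonMeasure (r : ℝ≥0) : ∫ x, x ∂Po(ℝ, r) = r := by
  rw [integral_map (f := fun x : ℝ => x) .of_discrete aestronglyMeasurable_id,
    integral_poissonMeasure]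
  simpa [mul_comm] using (hasSum_mean_poissonMeasure r).tsum_eq

lemma poissonPMF_eq_poissonMeasure_singleton (r : ℝ≥0) (n : ℕ) :
    (poissonPMF r n : ℝ≥0∞) = poissonMeasure r {n} := by
  rw [poissonMeasure_singleton]
  rfl

end Poisson

lemma ae_tendsto_sum_range_div_of_map_eq {Ω : Type*} [MeasurableSpace Ω] {P : Measure Ω}
    {μ : Measure ℝ} {X : ℕ → Ω → ℝ} (hmeas : ∀ n, Measurable (X n))
    (hindep : Pairwise fun i j => IndepFun (X i) (X j) P) (hlaw : ∀ n, P.map (X n) = μ)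
    (hint : Integrable id μ) :
    ∀ᵐ ω ∂P, Tendsto (fun n : ℕ => (∑ i ∈ range n, X i ω) / n) atTop (𝓝 (∫ x, x ∂μ)) := by
  have hident : ∀ i, IdentDistrib (X i) (X 0) P P := fun i =>
    ⟨(hmeas i).aemeasurable, (hmeas 0).aemeasurable, by rw [hlaw i, hlaw 0]⟩
  have hint0 : Integrable (X 0) P := by
    rw [← hlaw 0] at hint
    exact (integrable_map_measure aestronglyMeasurable_id (hmeas 0).aemeasurable).mp hint
  have hmean : ∫ ω, X 0 ω ∂P = ∫ x, x ∂μ := by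
    rw [← hlaw 0, integral_map (f := fun x : ℝ => x) (hmeas 0).aemeasurable
      aestronglyMeasurable_id]
  simpa only [hmean] using strong_law_ae_real X hint0 hindep hident

namespace IsPoissonProcess

variable {Ω : Type*} [MeasurableSpace Ω] {P : Measure Ω} {r : ℝ≥0} {N : ℝ → Ω → ℕ}

lemma map_sub (hN : IsPoissonProcess P r N) {s t : ℝ} (hs : 0 ≤ s) (hst : s ≤ t) :
    P.map (fun ω => N t ω - N s ω) = poissonMeasure (r * (t - s).toNNReal) := by
  have hmeas : Measurable fun ω => N t ω - N s ω := (hN.measurable t).sub (hN.measurable s)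
  refine Measure.ext_of_singleton fun k => ?_
  rw [Measure.map_apply hmeas (measurableSet_singleton k),
    ← poissonPMF_eq_poissonMeasure_singleton, ← hN.poisson_law s t hs hst k]
  rfl

lemma sum_range_increment (hN : IsPoissonProcess P r N) (ω : Ω) (m : ℕ) :
    ∑ k ∈ range m, ((N ↑(k + 1) ω - N k ω : ℕ) : ℝ) = N m ω := by
  have hle (k : ℕ) : N k ω ≤ N ↑(k + 1) ω := hN.mono ω (by simp)
  simp only [Nat.cast_sub (hle _)]
  rw [Finset.sum_range_sub (fun k : ℕ => (N k ω : ℝ)), Nat.cast_zero, hN.init, Nat.cast_zero,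
    sub_zero]

lemma ae_tendsto_div_natCast (hN : IsPoissonProcess P r N) :
    ∀ᵐ ω ∂P, Tendsto (fun m : ℕ => (N m ω : ℝ) / m) atTop (𝓝 r) := by
  set Z : ℕ → Ω → ℝ := fun k ω => ((N ↑(k + 1) ω - N k ω : ℕ) : ℝ)
  have hinc (k : ℕ) : Measurable fun ω => N ↑(k + 1) ω - N k ω :=
    (hN.measurable _).sub (hN.measurable _)
  have hmeas (k : ℕ) : Measurable (Z k) := measurable_from_top.comp (hinc k)
  have hlaw (k : ℕ) : P.map (Z k) = Po(ℝ, r) := by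
    change P.map ((Nat.cast : ℕ → ℝ) ∘ fun ω => N ↑(k + 1) ω - N k ω) = _
    rw [← Measure.map_map measurable_from_top (hinc k),
      hN.map_sub (by positivity) (by simp)]
    simp
  have hindep : Pairwise fun i j => IndepFun (Z i) (Z j) P := by
    have hlt {i j : ℕ} (hij : i < j) : IndepFun (Z i) (Z j) P :=
      (hN.indep_increments _ _ _ _ (by simp) (by exact_mod_cast hij) (by simp)).comp
        measurable_from_top measurable_from_top
    exact fun i j hij => hij.lt_or_gt.elim hlt fun hji => (hlt hji).symm
  have hslln := ae_tendsto_sum_range_div_of_map_eq hmeas hindep hlaw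
    (integrable_id_map_cast_poissonMeasure r)
  rw [integral_id_map_cast_poissonMeasure] at hslln
  filter_upwards [hslln] with ω hω
  simpa only [Z, hN.sum_range_increment] using hω

lemma ae_tendsto_div_atTop (hN : IsPoissonProcess P r N) :
    ∀ᵐ ω ∂P, Tendsto (fun t => (N t ω : ℝ) / t) atTop (𝓝 r) := by
  filter_upwards [hN.ae_tendsto_div_natCast] with ω hω
  exact Monotone.tendsto_div_self_atTop (fun _ _ hst => Nat.cast_le.mpr (hN.mono ω hst)) hω

end IsPoissonProcess

theorem nakamoto_stopping_time_finite_general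
    {Ω : Type*} [MeasurableSpace Ω] (P : Measure Ω)
    (a h : ℝ≥0) (ha : 0 < a) (hh : 0 < h) (Δ : ℝ) (hΔ : 0 ≤ Δ)
    (hfault : 1 / (a : ℝ) > 1 / (h : ℝ) + Δ)
    (A : ℝ → Ω → ℕ) (hA : IsPoissonProcess P a A)
    (X : ℕ → Ω → ℝ) (hXmeas : ∀ n, Measurable (X n))
    (hXiid : iIndepFun X P)
    (hXlaw : ∀ n, P.map (X n) = shiftedExpMeasure h Δ) :
    ∀ᵐ ω ∂P,
      {t : ℝ | 0 ≤ t ∧ renewalCount X t ω = A t ω + 1}.Nonempty := by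
  have hh' : (0 : ℝ) < h := hh
  have hX_pos : ∀ᵐ ω ∂P, ∀ i, 0 < X i ω := ae_all_iff.mpr fun i =>
    (ae_of_ae_map (hXmeas i).aemeasurable ((hXlaw i).symm ▸ ae_lt_shiftedExpMeasure h Δ)).mono
      fun _ hlt => hΔ.trans_lt hlt
  have hX_slln := ae_tendsto_sum_range_div_of_map_eq hXmeas (fun i j hij => hXiid.indepFun hij)
    hXlaw (integrable_id_shiftedExpMeasure hh' hΔ)
  rw [integral_id_shiftedExpMeasure hh' hΔ] at hX_slln
  have hmean_pos : 0 < Δ + 1 / (h : ℝ) := by positivity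
  have hrate : (a : ℝ) * (Δ + 1 / h) < 1 := (lt_div_iff₀' (by exact_mod_cast ha)).mp (by linarith)
  filter_upwards [hX_pos, hX_slln, hA.ae_tendsto_div_atTop] with ω hpos hX hA_lim
  set S : ℕ → ℝ := fun n => ∑ i ∈ range n, X i ω
  obtain ⟨n, hn⟩ := (eventually_lt_of_tendsto_div hA_lim hX hmean_pos hrate).exists
  obtain ⟨m, hm⟩ := Monotone.exists_apply_succ_eq (u := fun n => A (S n) ω)
    ((hA.mono ω).comp (strictMono_sum_range_of_pos hpos).monotone) ⟨n, by exact_mod_cast hn⟩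
  exact ⟨S (m + 1), sum_nonneg fun i _ => (hpos i).le, by rw [renewalCount_sum_range hpos, hm]⟩

/-- **Finiteness of the Nakamoto stopping time.**
Let `A` be a Poisson process of rate `a` and `J` an independent renewal process
with inter-arrival times `Δ + Exp(h)`, where `1/a > 1/h + Δ`.  Let
`τ = inf{t ≥ 0 : J_t = A_t + 1}` be the first time the renewal process
exceeds the Poisson process by one.  Then `τ` is finite with probability one,
i.e. almost surely the set `{t ≥ 0 : J_t = A_t + 1}` is nonempty. -/
theorem nakamoto_stopping_time_finite
    {Ω : Type*} [MeasurableSpace Ω] (P : Measure Ω) [IsProbabilityMeasure P]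
    (a h : ℝ≥0) (ha : 0 < a) (hh : 0 < h) (Δ : ℝ) (hΔ : 0 ≤ Δ)
    (hfault : 1 / (a : ℝ) > 1 / (h : ℝ) + Δ)
    (A : ℝ → Ω → ℕ) (hA : IsPoissonProcess P a A)
    (X : ℕ → Ω → ℝ) (hXmeas : ∀ n, Measurable (X n))
    (hXiid : iIndepFun X P)
    (hXlaw : ∀ n, P.map (X n) = shiftedExpMeasure h Δ)
    (hAX : IndepFun (fun ω t => A t ω) (fun ω n => X n ω) P) :
    ∀ᵐ ω ∂P,
      {t : ℝ | 0 ≤ t ∧ renewalCount X t ω = A t ω + 1}.Nonempty :=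
  nakamoto_stopping_time_finite_general P a h ha hh Δ hΔ hfault A hA X hXmeas hXiid hXlaw
end

section
/- Fix λ = a + h > 0 and Δ > 0. For each integer l > 0, the conditional pmf P_{W|L}(·|l) defined by: P(w) = Poisson(aΔ)(w) for w < l; P(l) = ∫_0^Δ f_2(t; l, a) e^{-λ(Δ-t)} dt; and P(w) = ∫_0^Δ f_2(t; l, a) ∫_0^{Δ-t} λ e^{-λ s} Poisson(a(Δ - t - s))(w - l - 1) ds dt for w > l, where f_2(·; l, a) is the Erlang density with shape l and rate a, is a genuine probability mass function: all values are nonnegative and Σ_{w=0}^{∞} P_{W|L}(w|l) = 1. -/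
/-!
Split the sum at `w = l`. The terms `w < l` add up to `P(Poisson(aΔ) < l)`, the probability that
the `l`-th adversarial arrival, an Erlang time, comes after `Δ`; by the fundamental theorem of
calculus this is `1 - ∫₀^Δ f₂`. For `w > l`, the Poisson terms are dominated by the exponential
series, so the sum can be moved inside both integrals. The inner Poisson pmf then sums to `1`,
which leaves `∫₀^Δ f₂(t) (1 - e^{-λ(Δ-t)}) dt`. This cancels the `w = l` term and the remaining
Erlang mass.
-/

open MeasureTheory intervalIntegral

/-- The Poisson pmf with mean `μ`: `e^{-μ} μ^k / k!`. -/
noncomputable def poissonProb (μ : ℝ) (k : ℕ) : ℝ :=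
  Real.exp (-μ) * μ ^ k / (Nat.factorial k)

/-- The Erlang density with shape `l` and rate `a`:
`f₂(t; l, a) = a^l t^{l-1} e^{-a t} / (l-1)!`. -/
noncomputable def erlangPDF (l : ℕ) (a t : ℝ) : ℝ :=
  a ^ l * t ^ (l - 1) * Real.exp (-a * t) / (Nat.factorial (l - 1))

/-- The conditional pmf `P_{W|L}(· | l)` for `l > 0`: the number of heights the
adversarial branch gains during a window of length `Δ` when it starts `l`
heights behind the public height. -/
noncomputable def PWL (a lam Δ : ℝ) (l : ℕ) (w : ℕ) : ℝ :=
  if w < l then poissonProb (a * Δ) w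
  else if w = l then
    ∫ t in (0 : ℝ)..Δ, erlangPDF l a t * Real.exp (-lam * (Δ - t))
  else
    ∫ t in (0 : ℝ)..Δ, erlangPDF l a t *
      ∫ s in (0 : ℝ)..(Δ - t),
        lam * Real.exp (-lam * s) * poissonProb (a * (Δ - t - s)) (w - l - 1)

open Finset
open scoped Interval

lemma poissonProb_nonneg {μ : ℝ} (hμ : 0 ≤ μ) (k : ℕ) : 0 ≤ poissonProb μ k := by
  unfold poissonProb; positivity

lemma poissonProb_le_pow_div_factorial {μ c : ℝ} (hμ : 0 ≤ μ) (hμc : μ ≤ c) (k : ℕ) :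
    poissonProb μ k ≤ c ^ k / k.factorial := by
  unfold poissonProb
  have hexp : Real.exp (-μ) ≤ 1 := Real.exp_le_one_iff.mpr (neg_nonpos.mpr hμ)
  calc Real.exp (-μ) * μ ^ k / k.factorial ≤ 1 * c ^ k / k.factorial := by gcongr
    _ = c ^ k / k.factorial := by rw [one_mul]

lemma hasSum_poissonProb (μ : ℝ) : HasSum (poissonProb μ) 1 := by
  have h := (NormedSpace.expSeries_div_hasSum_exp μ).mul_left (Real.exp (-μ))
  rw [← Real.exp_eq_exp_ℝ, ← Real.exp_add, neg_add_cancel, Real.exp_zero] at h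
  show HasSum (fun k => poissonProb μ k) 1
  simpa only [poissonProb, mul_div_assoc] using h

@[fun_prop]
lemma continuous_poissonProb (k : ℕ) : Continuous fun μ => poissonProb μ k := by
  unfold poissonProb; fun_prop

lemma hasDerivAt_poissonProb_mul_zero (a t : ℝ) :
    HasDerivAt (fun t => poissonProb (a * t) 0) (-(a * poissonProb (a * t) 0)) t := by
  simp only [poissonProb, pow_zero, Nat.factorial_zero, Nat.cast_one, div_one, mul_one]
  exact (((hasDerivAt_id' t).const_mul a).fun_neg.exp).congr_deriv (by ring)

lemma hasDerivAt_poissonProb_mul_succ (a t : ℝ) (n : ℕ) :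
    HasDerivAt (fun t => poissonProb (a * t) (n + 1))
      (a * poissonProb (a * t) n - a * poissonProb (a * t) (n + 1)) t := by
  have hat : HasDerivAt (fun t => a * t) a t := by
    simpa using (hasDerivAt_id t).const_mul a
  refine ((hat.fun_neg.exp.fun_mul (hat.fun_pow (n + 1))).div_const
    ((n + 1).factorial : ℝ)).congr_deriv ?_
  simp only [poissonProb, Nat.factorial_succ, Nat.cast_mul, Nat.add_sub_cancel]
  push_cast
  field_simp
  ring

lemma hasDerivAt_sum_range_poissonProb_mul (a t : ℝ) (n : ℕ) :
    HasDerivAt (fun t => ∑ k ∈ range (n + 1), poissonProb (a * t) k)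
      (-(a * poissonProb (a * t) n)) t := by
  induction n with
  | zero => simpa using hasDerivAt_poissonProb_mul_zero a t
  | succ n ih =>
    simp_rw [sum_range_succ _ (n + 1)]
    exact (ih.fun_add (hasDerivAt_poissonProb_mul_succ a t n)).congr_deriv (by ring)

lemma erlangPDF_succ (n : ℕ) (a t : ℝ) : erlangPDF (n + 1) a t = a * poissonProb (a * t) n := by
  simp only [erlangPDF, poissonProb, Nat.add_sub_cancel, mul_pow, pow_succ, neg_mul]
  ring

lemma erlangPDF_nonneg (l : ℕ) {a t : ℝ} (ha : 0 ≤ a) (ht : 0 ≤ t) : 0 ≤ erlangPDF l a t := by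
  unfold erlangPDF; positivity

@[fun_prop]
lemma continuous_erlangPDF (l : ℕ) (a : ℝ) : Continuous (erlangPDF l a) := by
  unfold erlangPDF; fun_prop

lemma integral_erlangPDF (n : ℕ) (a Δ : ℝ) :
    ∫ t in (0 : ℝ)..Δ, erlangPDF (n + 1) a t
      = 1 - ∑ k ∈ range (n + 1), poissonProb (a * Δ) k := by
  have hderiv : ∀ t ∈ Set.uIcc 0 Δ, HasDerivAt
      (fun t => -∑ k ∈ range (n + 1), poissonProb (a * t) k) (erlangPDF (n + 1) a t) t :=
    fun t _ => by simpa [erlangPDF_succ] using (hasDerivAt_sum_range_poissonProb_mul a t n).fun_neg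
  rw [intervalIntegral.integral_eq_sub_of_hasDerivAt hderiv
    ((continuous_erlangPDF _ a).intervalIntegrable 0 Δ)]
  have hzero : ∑ k ∈ range (n + 1), poissonProb (a * 0) k = 1 := by
    simp [poissonProb, sum_range_succ']
  rw [hzero]
  ring

lemma integral_mul_exp_neg_mul (lam u : ℝ) :
    ∫ s in (0 : ℝ)..u, lam * Real.exp (-lam * s) = 1 - Real.exp (-lam * u) := by
  have hderiv : ∀ s ∈ Set.uIcc 0 u,
      HasDerivAt (fun s => -Real.exp (-lam * s)) (lam * Real.exp (-lam * s)) s :=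
    fun s _ => (((hasDerivAt_id' s).const_mul (-lam)).exp.fun_neg).congr_deriv (by ring)
  rw [intervalIntegral.integral_eq_sub_of_hasDerivAt hderiv
    ((by fun_prop : Continuous fun s => lam * Real.exp (-lam * s)).intervalIntegrable 0 u)]
  simp only [mul_zero, Real.exp_zero]
  ring

lemma norm_mul_poissonProb_le {x μ M c : ℝ} (hx : ‖x‖ ≤ M) (hμ : 0 ≤ μ) (hμc : μ ≤ c) (k : ℕ) :
    ‖x * poissonProb μ k‖ ≤ M * (c ^ k / k.factorial) := by
  rw [norm_mul, Real.norm_of_nonneg (poissonProb_nonneg hμ k)]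
  exact mul_le_mul hx (poissonProb_le_pow_div_factorial hμ hμc k) (poissonProb_nonneg hμ k)
    ((norm_nonneg x).trans hx)

section IntervalIntegralSeries

variable {E : Type*} [NormedAddCommGroup E] [NormedSpace ℝ E] {a b : ℝ}

lemma hasSum_intervalIntegral_of_norm_le_mul {ι : Type*} [Countable ι] {F : ι → ℝ → E}
    {f : ℝ → E} {B : ℝ → ℝ} {C : ι → ℝ}
    (hF : ∀ j, AEStronglyMeasurable (F j) (volume.restrict (Ι a b)))
    (hB : IntervalIntegrable B volume a b) (hC : Summable C)
    (hle : ∀ j, ∀ t ∈ Ι a b, ‖F j t‖ ≤ B t * C j)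
    (hsum : ∀ t ∈ Ι a b, HasSum (fun j => F j t) (f t)) :
    HasSum (fun j => ∫ t in a..b, F j t) (∫ t in a..b, f t) := by
  refine intervalIntegral.hasSum_integral_of_dominated_convergence (fun j t => B t * C j) hF
    (fun j => .of_forall (hle j)) (.of_forall fun t _ => hC.mul_left (B t)) ?_ (.of_forall hsum)
  simpa only [tsum_mul_left] using hB.mul_const (∑' j, C j)

end IntervalIntegralSeries

lemma hasSum_intervalIntegral_mul_poissonProb {a b c : ℝ} {g μ : ℝ → ℝ} (hg : Continuous g)
    (hμ : Continuous μ) (hμc : ∀ s ∈ Ι a b, μ s ∈ Set.Icc 0 c) :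
    HasSum (fun k => ∫ s in a..b, g s * poissonProb (μ s) k) (∫ s in a..b, g s) := by
  refine hasSum_intervalIntegral_of_norm_le_mul (B := fun s => ‖g s‖)
    (C := fun k => c ^ k / k.factorial) (fun k => by fun_prop) (hg.norm.intervalIntegrable a b)
    (NormedSpace.expSeries_div_hasSum_exp c).summable
    (fun k s hs => norm_mul_poissonProb_le le_rfl (hμc s hs).1 (hμc s hs).2 k) fun s _ => ?_
  simpa using (hasSum_poissonProb (μ s)).mul_left (g s)

section PWL

variable {a lam Δ : ℝ} {l : ℕ}

lemma PWL_of_lt {w : ℕ} (hw : w < l) : PWL a lam Δ l w = poissonProb (a * Δ) w :=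
  if_pos hw

lemma PWL_self :
    PWL a lam Δ l l = ∫ t in (0 : ℝ)..Δ, erlangPDF l a t * Real.exp (-lam * (Δ - t)) := by
  rw [PWL, if_neg (lt_irrefl l), if_pos rfl]

lemma PWL_add_succ (j : ℕ) :
    PWL a lam Δ l (j + (l + 1)) = ∫ t in (0 : ℝ)..Δ, erlangPDF l a t *
      ∫ s in (0 : ℝ)..(Δ - t), lam * Real.exp (-lam * s) * poissonProb (a * (Δ - t - s)) j := by
  rw [PWL, if_neg (by omega), if_neg (by omega), show j + (l + 1) - l - 1 = j by omega]

lemma sum_range_succ_PWL : ∑ w ∈ range (l + 1), PWL a lam Δ l w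
    = ∑ k ∈ range l, poissonProb (a * Δ) k
      + ∫ t in (0 : ℝ)..Δ, erlangPDF l a t * Real.exp (-lam * (Δ - t)) := by
  rw [sum_range_succ, PWL_self]
  congr 1
  exact sum_congr rfl fun w hw => PWL_of_lt (mem_range.mp hw)

lemma mul_sub_sub_mem_Icc (ha : 0 ≤ a) (hΔ : 0 ≤ Δ) {t s : ℝ} (ht : t ∈ Ι 0 Δ)
    (hs : s ∈ Ι 0 (Δ - t)) : a * (Δ - t - s) ∈ Set.Icc 0 (a * Δ) := by
  rw [Set.uIoc_of_le hΔ] at ht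
  rw [Set.uIoc_of_le (by linarith [ht.2])] at hs
  constructor <;> nlinarith [ht.1, hs.1, hs.2]

lemma norm_mul_exp_neg_mul_le (hlam : 0 ≤ lam) {s : ℝ} (hs : 0 ≤ s) :
    ‖lam * Real.exp (-lam * s)‖ ≤ lam := by
  rw [Real.norm_of_nonneg (by positivity)]
  exact mul_le_of_le_one_right hlam (Real.exp_le_one_iff.mpr (by nlinarith))

lemma PWL_nonneg (ha : 0 ≤ a) (hlam : 0 ≤ lam) (hΔ : 0 ≤ Δ) (w : ℕ) : 0 ≤ PWL a lam Δ l w := by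
  unfold PWL
  split_ifs
  · exact poissonProb_nonneg (by positivity) w
  · exact intervalIntegral.integral_nonneg hΔ fun t ht =>
      mul_nonneg (erlangPDF_nonneg l ha ht.1) (Real.exp_nonneg _)
  · refine intervalIntegral.integral_nonneg hΔ fun t ht =>
      mul_nonneg (erlangPDF_nonneg l ha ht.1) ?_
    refine intervalIntegral.integral_nonneg (by linarith [ht.2]) fun s hs => ?_
    have hmean : 0 ≤ a * (Δ - t - s) := mul_nonneg ha (by linarith [hs.2])
    exact mul_nonneg (by positivity) (poissonProb_nonneg hmean _)

lemma hasSum_PWL_add_succ (ha : 0 ≤ a) (hlam : 0 ≤ lam) (hΔ : 0 ≤ Δ) :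
    HasSum (fun j => PWL a lam Δ l (j + (l + 1)))
      (∫ t in (0 : ℝ)..Δ, erlangPDF l a t * (1 - Real.exp (-lam * (Δ - t)))) := by
  simp_rw [PWL_add_succ]
  refine hasSum_intervalIntegral_of_norm_le_mul (B := erlangPDF l a)
    (C := fun j => lam * ((a * Δ) ^ j / j.factorial) * Δ) (fun j => by fun_prop)
    ((continuous_erlangPDF l a).intervalIntegrable 0 Δ)
    (((NormedSpace.expSeries_div_hasSum_exp (a * Δ)).summable.mul_left lam).mul_right Δ)
    (fun j t ht => ?_) fun t ht => ?_
  · have ht' := ht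
    rw [Set.uIoc_of_le hΔ] at ht'
    have hinner : ‖∫ s in (0 : ℝ)..(Δ - t),
        lam * Real.exp (-lam * s) * poissonProb (a * (Δ - t - s)) j‖
          ≤ lam * ((a * Δ) ^ j / j.factorial) * |Δ - t - 0| := by
      refine intervalIntegral.norm_integral_le_of_norm_le_const fun s hs => ?_
      have hmean := mul_sub_sub_mem_Icc ha hΔ ht hs
      rw [Set.uIoc_of_le (by linarith [ht'.2])] at hs
      exact norm_mul_poissonProb_le (norm_mul_exp_neg_mul_le hlam hs.1.le) hmean.1 hmean.2 j
    rw [norm_mul, Real.norm_of_nonneg (erlangPDF_nonneg l ha ht'.1.le)]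
    refine mul_le_mul_of_nonneg_left (hinner.trans ?_) (erlangPDF_nonneg l ha ht'.1.le)
    rw [sub_zero, abs_of_nonneg (by linarith [ht'.2])]
    gcongr
    linarith [ht'.1]
  · have hmix := hasSum_intervalIntegral_mul_poissonProb (a := 0) (b := Δ - t)
      (g := fun s => lam * Real.exp (-lam * s)) (μ := fun s => a * (Δ - t - s)) (by fun_prop)
      (by fun_prop) fun s hs => mul_sub_sub_mem_Icc ha hΔ ht hs
    rw [integral_mul_exp_neg_mul] at hmix
    exact hmix.mul_left (erlangPDF l a t)

end PWL

/-- **`P_{W|L}(· | l)` is a genuine probability mass function.**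
For rates `a, h > 0` with `λ = a + h`, a window `Δ > 0`, and any integer
`l > 0`, the conditional pmf `P_{W|L}(· | l)` is nonnegative and sums to `1`
over `w ∈ ℕ`. -/
theorem PWL_is_pmf (a h Δ : ℝ) (ha : 0 < a) (hh : 0 < h) (hΔ : 0 < Δ)
    (lam : ℝ) (hlam : lam = a + h) (l : ℕ) (hl : 0 < l) :
    (∀ w : ℕ, 0 ≤ PWL a lam Δ l w) ∧
    (∑' w : ℕ, PWL a lam Δ l w) = 1 := by
  have hlam0 : 0 ≤ lam := by linarith
  refine ⟨PWL_nonneg ha.le hlam0 hΔ.le, HasSum.tsum_eq ?_⟩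
  obtain ⟨n, rfl⟩ := Nat.exists_eq_add_one_of_ne_zero hl.ne'
  have hvalue : ∫ t in (0 : ℝ)..Δ, erlangPDF (n + 1) a t * (1 - Real.exp (-lam * (Δ - t)))
      = 1 - (∑ k ∈ range (n + 1), poissonProb (a * Δ) k
        + ∫ t in (0 : ℝ)..Δ, erlangPDF (n + 1) a t * Real.exp (-lam * (Δ - t))) := by
    simp_rw [mul_one_sub]
    rw [intervalIntegral.integral_sub ((continuous_erlangPDF _ a).intervalIntegrable 0 Δ)
      ((by fun_prop : Continuous _).intervalIntegrable 0 Δ), integral_erlangPDF]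
    ring
  rw [← hasSum_nat_add_iff' (n + 1 + 1), sum_range_succ_PWL, ← hvalue]
  exact hasSum_PWL_add_succ ha.le hlam0 hΔ.le
end
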